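/- There exist ε > 0, R₀ > 1/ε¹⁰ and a constant C > 0 (depending only on a, b, ε) such that for all R > R₀: for every w ∈ K⁺ and every n ≥ 1, Mₙ ≤ C · max{Mₙ₋₁^{3/2}, |xₙ₋₁|³}. -/

import Mathlib

open Complex Filter Topology

/-- The quadratic automorphism `H(x,y,z) = (xy + az, x² + by, x)` of `ℂ³`. -/
noncomputable def H (a b : ℂ) (w : ℂ × ℂ × ℂ) : ℂ × ℂ × ℂ :=
  (w.1 * w.2.1 + a * w.2.2, w.1 ^ 2 + b * w.2.1, w.1)

/-- `V⁻ = {(x,y,z) : |xy| > max{R, 2|az|, |x|^{3/2}, (1/ε)|y|^{3/2}}}`. -/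
noncomputable def Vminus (a : ℂ) (ε R : ℝ) : Set (ℂ × ℂ × ℂ) :=
  {w | ‖(w.1 * w.2.1)‖ >
    max R (max (2 * ‖(a * w.2.2)‖)
      (max ((‖w.1‖) ^ ((3 : ℝ) / 2))
        ((1 / ε) * (‖w.2.1‖) ^ ((3 : ℝ) / 2))))}

/-- `U⁺ = ⋃_{n≥0} H⁻ⁿ(V⁻)`, i.e. the points whose forward orbit meets `V⁻`. -/
noncomputable def Uplus (a b : ℂ) (ε R : ℝ) : Set (ℂ × ℂ × ℂ) :=
  ⋃ n : ℕ, (H a b)^[n] ⁻¹' Vminus a ε R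

/-- `K⁺ = ℂ³ \ U⁺`. -/
noncomputable def Kplus (a b : ℂ) (ε R : ℝ) : Set (ℂ × ℂ × ℂ) :=
  (Uplus a b ε R)ᶜ

/-- `Mₙ = max{R, 2|azₙ|, |xₙ|^{3/2}, (1/ε)|yₙ|^{3/2}}` where `Hⁿ(w) = (xₙ,yₙ,zₙ)`. -/
noncomputable def Mseq (a b : ℂ) (ε R : ℝ) (w : ℂ × ℂ × ℂ) (n : ℕ) : ℝ :=
  max R (max (2 * ‖(a * ((H a b)^[n] w).2.2)‖)
    (max ((‖((H a b)^[n] w).1‖) ^ ((3 : ℝ) / 2))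
      ((1 / ε) * (‖((H a b)^[n] w).2.1‖) ^ ((3 : ℝ) / 2))))

/-!
Write `Hⁿ(w) = (x, y, z)`, `M = Mₙ` and `X = max{M^{3/2}, |x|³}`; since `M ≥ R ≥ 1`, both `M` and
`|x|` are at most `X`. The next point is `(xy + az, x² + by, x)`. On `K⁺` we have `|xy| ≤ M`, and
`2|az| ≤ M` always, so `|xy + az|^{3/2} ≤ 4M^{3/2}`: this is the one place where `K⁺` matters, since
`|x|^{3/2}|y|^{3/2}` alone could be of size `M²`. Convexity of `t ↦ t^{3/2}` gives
`|x² + by|^{3/2} ≤ 2(|x|³ + |b|^{3/2}|y|^{3/2}) ≤ 2(X + ε|b|^{3/2}M)`, and `2|ax| ≤ 2|a|X`.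
-/

open Real

lemma rpow_add_le_two_mul_rpow_add_rpow {u v p : ℝ} (hu : 0 ≤ u) (hv : 0 ≤ v) (hp1 : 1 ≤ p)
    (hp2 : p ≤ 2) : (u + v) ^ p ≤ 2 * (u ^ p + v ^ p) := by
  lift u to NNReal using hu
  lift v to NNReal using hv
  have h2 : (2 : ℝ) ^ (p - 1) ≤ 2 := rpow_le_self_of_one_le one_le_two (by linarith)
  calc ((u + v : NNReal) : ℝ) ^ p ≤ (((2 : NNReal) ^ (p - 1) * (u ^ p + v ^ p) : NNReal) : ℝ) :=
        mod_cast NNReal.rpow_add_le_mul_rpow_add_rpow u v hp1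
    _ ≤ 2 * ((u : ℝ) ^ p + (v : ℝ) ^ p) := by
        push_cast
        gcongr

lemma norm_add_rpow_le {E : Type*} [SeminormedAddGroup E] (u v : E) {p : ℝ} (hp1 : 1 ≤ p)
    (hp2 : p ≤ 2) : ‖u + v‖ ^ p ≤ 2 * (‖u‖ ^ p + ‖v‖ ^ p) :=
  calc ‖u + v‖ ^ p ≤ (‖u‖ + ‖v‖) ^ p := by gcongr; exact norm_add_le u v
    _ ≤ 2 * (‖u‖ ^ p + ‖v‖ ^ p) :=
        rpow_add_le_two_mul_rpow_add_rpow (norm_nonneg u) (norm_nonneg v) hp1 hp2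

noncomputable def Mbound (a : ℂ) (ε R : ℝ) (p : ℂ × ℂ × ℂ) : ℝ :=
  max R (max (2 * ‖a * p.2.2‖)
    (max (‖p.1‖ ^ ((3 : ℝ) / 2)) ((1 / ε) * ‖p.2.1‖ ^ ((3 : ℝ) / 2))))

section

variable {a b : ℂ} {ε R : ℝ}

lemma Mseq_eq_Mbound (w : ℂ × ℂ × ℂ) (n : ℕ) :
    Mseq a b ε R w n = Mbound a ε R ((H a b)^[n] w) :=
  rfl

lemma iterate_notMem_Vminus_of_mem_Kplus {w : ℂ × ℂ × ℂ} (hw : w ∈ Kplus a b ε R) (n : ℕ) :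
    (H a b)^[n] w ∉ Vminus a ε R :=
  fun h ↦ hw (Set.mem_iUnion.2 ⟨n, h⟩)

lemma norm_mul_le_Mbound_of_notMem_Vminus {p : ℂ × ℂ × ℂ} (hp : p ∉ Vminus a ε R) :
    ‖p.1 * p.2.1‖ ≤ Mbound a ε R p :=
  not_lt.1 hp

lemma norm_fst_H_rpow_le {p : ℂ × ℂ × ℂ} (hp : ‖p.1 * p.2.1‖ ≤ Mbound a ε R p) :
    ‖(H a b p).1‖ ^ ((3 : ℝ) / 2) ≤ 4 * Mbound a ε R p ^ ((3 : ℝ) / 2) := by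
  have hz : 2 * ‖a * p.2.2‖ ≤ Mbound a ε R p := (le_max_left _ _).trans (le_max_right _ _)
  calc ‖p.1 * p.2.1 + a * p.2.2‖ ^ ((3 : ℝ) / 2)
      ≤ 2 * (‖p.1 * p.2.1‖ ^ ((3 : ℝ) / 2) + ‖a * p.2.2‖ ^ ((3 : ℝ) / 2)) :=
        norm_add_rpow_le _ _ (by norm_num) (by norm_num)
    _ ≤ 2 * (Mbound a ε R p ^ ((3 : ℝ) / 2) + Mbound a ε R p ^ ((3 : ℝ) / 2)) := by
        gcongr; linarith [norm_nonneg (a * p.2.2)]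
    _ = 4 * Mbound a ε R p ^ ((3 : ℝ) / 2) := by ring

lemma norm_snd_H_rpow_le (hε : 0 < ε) (p : ℂ × ℂ × ℂ) :
    (1 / ε) * ‖(H a b p).2.1‖ ^ ((3 : ℝ) / 2) ≤
      2 / ε * ‖p.1‖ ^ 3 + 2 * ‖b‖ ^ ((3 : ℝ) / 2) * Mbound a ε R p := by
  have hy : (1 / ε) * ‖p.2.1‖ ^ ((3 : ℝ) / 2) ≤ Mbound a ε R p :=
    ((le_max_right _ _).trans (le_max_right _ _)).trans (le_max_right _ _)
  calc (1 / ε) * ‖p.1 ^ 2 + b * p.2.1‖ ^ ((3 : ℝ) / 2)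
      ≤ (1 / ε) * (2 * (‖p.1 ^ 2‖ ^ ((3 : ℝ) / 2) + ‖b * p.2.1‖ ^ ((3 : ℝ) / 2))) := by
        gcongr; exact norm_add_rpow_le _ _ (by norm_num) (by norm_num)
    _ = 2 / ε * ‖p.1‖ ^ 3 + 2 * ‖b‖ ^ ((3 : ℝ) / 2) * ((1 / ε) * ‖p.2.1‖ ^ ((3 : ℝ) / 2)) := by
        rw [norm_pow, norm_mul, mul_rpow (norm_nonneg _) (norm_nonneg _),
          ← rpow_natCast_mul (norm_nonneg _)]
        norm_num
        ring
    _ ≤ 2 / ε * ‖p.1‖ ^ 3 + 2 * ‖b‖ ^ ((3 : ℝ) / 2) * Mbound a ε R p := by gcongr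

lemma Mbound_H_le (hε : 0 < ε) (hR : 1 ≤ R) {p : ℂ × ℂ × ℂ}
    (hp : ‖p.1 * p.2.1‖ ≤ Mbound a ε R p) :
    Mbound a ε R (H a b p) ≤ (5 + 2 * ‖a‖ + 2 / ε + 2 * ‖b‖ ^ ((3 : ℝ) / 2)) *
      max (Mbound a ε R p ^ ((3 : ℝ) / 2)) (‖p.1‖ ^ 3) := by
  have hfst := norm_fst_H_rpow_le (b := b) hp
  have hsnd := norm_snd_H_rpow_le (a := a) (b := b) (R := R) hε p
  set M := Mbound a ε R p
  set X := max (M ^ ((3 : ℝ) / 2)) (‖p.1‖ ^ 3)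
  have hRM : R ≤ M := le_max_left _ _
  have hxM : ‖p.1‖ ^ ((3 : ℝ) / 2) ≤ M :=
    ((le_max_left _ _).trans (le_max_right _ _)).trans (le_max_right _ _)
  have hM32X : M ^ ((3 : ℝ) / 2) ≤ X := le_max_left _ _
  have hx3X : ‖p.1‖ ^ 3 ≤ X := le_max_right _ _
  have hMX : M ≤ X := (self_le_rpow_of_one_le (hR.trans hRM) (by norm_num)).trans hM32X
  have hxX : ‖p.1‖ ≤ X := by
    rcases le_total ‖p.1‖ 1 with hx | hx
    · linarith
    · exact ((self_le_rpow_of_one_le hx (by norm_num)).trans hxM).trans hMX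
  have haX : ‖a‖ * ‖p.1‖ ≤ ‖a‖ * X := by gcongr
  have hbX : ‖b‖ ^ ((3 : ℝ) / 2) * M ≤ ‖b‖ ^ ((3 : ℝ) / 2) * X := by gcongr
  have hεX : 2 / ε * ‖p.1‖ ^ 3 ≤ 2 / ε * X := by gcongr
  have haX₀ : 0 ≤ ‖a‖ * X := by positivity
  have hεX₀ : 0 ≤ 2 / ε * X := by positivity
  have hbX₀ : 0 ≤ ‖b‖ ^ ((3 : ℝ) / 2) * X := by positivity
  refine max_le ?_ (max_le ?_ (max_le ?_ ?_))
  · linarith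
  · change 2 * ‖a * p.1‖ ≤ _
    rw [norm_mul]
    linarith
  · linarith
  · linarith

end

theorem stmt12_general (a b : ℂ) :
    ∃ ε > (0 : ℝ), ∃ R₀ > 1 / ε ^ 10, ∃ C > (0 : ℝ), ∀ R > R₀,
      ∀ w ∈ Kplus a b ε R, ∀ n : ℕ,
        Mseq a b ε R w (n + 1) ≤
          C * max ((Mseq a b ε R w n) ^ ((3 : ℝ) / 2))
            ((‖(((H a b)^[n] w).1)‖) ^ 3) := by
  refine ⟨1, one_pos, 2, by norm_num, 5 + 2 * ‖a‖ + 2 / 1 + 2 * ‖b‖ ^ ((3 : ℝ) / 2),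
    by positivity, fun R hR w hw n ↦ ?_⟩
  rw [Mseq_eq_Mbound, Mseq_eq_Mbound, Function.iterate_succ_apply']
  exact Mbound_H_le one_pos (by linarith)
    (norm_mul_le_Mbound_of_notMem_Vminus (iterate_notMem_Vminus_of_mem_Kplus hw n))

/-- there exist `ε > 0`, `R₀ > 1/ε¹⁰` and a constant `C > 0`
(depending only on `a, b, ε`) such that for all `R > R₀`: for every `w ∈ K⁺`
and every `n ≥ 1`, `Mₙ ≤ C · max{Mₙ₋₁^{3/2}, |xₙ₋₁|³}`. -/
theorem stmt12 (a b : ℂ) (ha : a ≠ 0) (hb : b ≠ 0) :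
    ∃ ε > (0 : ℝ), ∃ R₀ > 1 / ε ^ 10, ∃ C > (0 : ℝ), ∀ R > R₀,
      ∀ w ∈ Kplus a b ε R, ∀ n : ℕ,
        Mseq a b ε R w (n + 1) ≤
          C * max ((Mseq a b ε R w n) ^ ((3 : ℝ) / 2))
            ((‖(((H a b)^[n] w).1)‖) ^ 3) :=
  stmt12_general a b
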